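/- arXiv:1410.8625 — 4 statements merged into one kernel-verified Lean document; each statement's English description precedes it below -/
import Mathlib

section
/- (Lemma III.6, summability part) Let Assumption 2 hold and let (x^k), (y^k), (p^k) be BADMM iterates. If the sequence z^k := (x^k, y^k, p^k) is bounded, then ∑_{k=0}^∞ ‖z^k − z^{k+1}‖² < ∞; in particular ‖z^k − z^{k+1}‖ → 0 as k → ∞. -/
/-!
One BADMM iteration lowers the augmented Lagrangian `L_α` by `μ₁/2 ‖Δx‖² + μ₂/2 ‖Δy‖²`, except
for the increase `‖Δp‖²/α` caused by the dual update. The optimality condition of the `x`-update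
reads `Aᵀ p^{k+1} = -(∇f(x^{k+1}) + ∇φ(x^{k+1}) - ∇φ(x^k))`, so `AAᵀ ⪰ μ₀ I` and the Lipschitz
gradients bound `μ₀ ‖Δp^{k+1}‖²` by `‖Δx^{k+1}‖²` and `‖Δx^k‖²`. For `α` beyond the threshold the
increase is absorbed and `L_α(z^{k+1}) + 2ℓ_φ²/(α μ₀) ‖Δx^k‖²` is a Lyapunov function; it is
bounded below along bounded iterates because `f` is continuous and `g` lower semicontinuous, and
telescoping its decrease gives the summability.
-/

open scoped InnerProductSpace

/-- The augmented Lagrangian `L_α(x,y,p)`. -/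
noncomputable def augL {n₁ n₂ m : ℕ}
    (A : EuclideanSpace ℝ (Fin n₁) →L[ℝ] EuclideanSpace ℝ (Fin m))
    (B : EuclideanSpace ℝ (Fin n₂) →L[ℝ] EuclideanSpace ℝ (Fin m))
    (f : EuclideanSpace ℝ (Fin n₁) → ℝ) (g : EuclideanSpace ℝ (Fin n₂) → ℝ)
    (α : ℝ) (x : EuclideanSpace ℝ (Fin n₁)) (y : EuclideanSpace ℝ (Fin n₂))
    (p : EuclideanSpace ℝ (Fin m)) : ℝ :=
  f x + g y + ⟪p, A x - B y⟫_ℝ + α / 2 * ‖A x - B y‖ ^ 2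

/-- Bregman distance of a differentiable function `h` with gradient `h'`. -/
noncomputable def bregman {n : ℕ} (h : EuclideanSpace ℝ (Fin n) → ℝ)
    (h' : EuclideanSpace ℝ (Fin n) → EuclideanSpace ℝ (Fin n))
    (u v : EuclideanSpace ℝ (Fin n)) : ℝ :=
  h u - h v - ⟪h' v, u - v⟫_ℝ

open Set Filter

section Gradient

variable {E : Type*} [NormedAddCommGroup E] [InnerProductSpace ℝ E] [CompleteSpace E]
  {h k : E → ℝ} {a b v : E}

theorem HasFDerivAt.hasGradientAt_of_apply_eq_inner {D : E →L[ℝ] ℝ} (hD : HasFDerivAt h D v)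
    (hDa : ∀ w, D w = ⟪a, w⟫_ℝ) : HasGradientAt h a v := by
  have hDa' : D = InnerProductSpace.toDual ℝ E a := by
    ext w
    simp [hDa]
  rwa [hasGradientAt_iff_hasFDerivAt, ← hDa']

theorem HasGradientAt.add (ha : HasGradientAt h a v) (hb : HasGradientAt k b v) :
    HasGradientAt (fun z => h z + k z) (a + b) v :=
  (ha.hasFDerivAt.add hb.hasFDerivAt).hasGradientAt_of_apply_eq_inner fun w => by
    simp [inner_add_left]

theorem HasGradientAt.sub (ha : HasGradientAt h a v) (hb : HasGradientAt k b v) :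
    HasGradientAt (fun z => h z - k z) (a - b) v :=
  (ha.hasFDerivAt.sub hb.hasFDerivAt).hasGradientAt_of_apply_eq_inner fun w => by
    simp [inner_sub_left]

theorem hasGradientAt_half_mul_sq_norm (μ : ℝ) (v : E) :
    HasGradientAt (fun z => μ / 2 * ‖z‖ ^ 2) (μ • v) v :=
  (((hasFDerivAt_id v).norm_sq).const_mul (μ / 2)).hasGradientAt_of_apply_eq_inner fun w => by
    simp only [id_eq, ContinuousLinearMap.comp_id, smul_apply, coe_innerSL_apply, nsmul_eq_mul,
      Nat.cast_ofNat, smul_eq_mul, real_inner_comm, real_inner_smul_right]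
    ring

theorem IsLocalMin.hasGradientAt_eq_zero (hmin : IsLocalMin h v) (ha : HasGradientAt h a v) :
    a = 0 := by
  simpa using hmin.hasFDerivAt_eq_zero ha.hasFDerivAt

theorem ConvexOn.inner_le_sub_of_hasGradientAt (hconv : ConvexOn ℝ univ h)
    (ha : HasGradientAt h a v) (u : E) : ⟪a, u - v⟫_ℝ ≤ h u - h v := by
  have hline : ConvexOn ℝ univ (h ∘ AffineMap.lineMap (k := ℝ) v u) := by
    simpa using hconv.comp_affineMap (AffineMap.lineMap (k := ℝ) v u)
  have hderiv : HasDerivAt (h ∘ AffineMap.lineMap (k := ℝ) v u) ⟪a, u - v⟫_ℝ 0 := by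
    have hv : HasFDerivAt h (InnerProductSpace.toDual ℝ E a)
        (AffineMap.lineMap (k := ℝ) v u (0 : ℝ)) := by
      simpa using ha.hasFDerivAt
    simpa using hv.comp_hasDerivAt (0 : ℝ) AffineMap.hasDerivAt_lineMap
  simpa [slope] using hline.le_slope_of_hasDerivAt (mem_univ 0) (mem_univ 1) one_pos hderiv

theorem ConvexOn.add_inner_add_sq_le_of_hasGradientAt {μ : ℝ}
    (hconv : ConvexOn ℝ univ (fun z => h z - μ / 2 * ‖z‖ ^ 2)) (ha : HasGradientAt h a v)
    (u : E) : h v + ⟪a, u - v⟫_ℝ + μ / 2 * ‖u - v‖ ^ 2 ≤ h u := by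
  have key := hconv.inner_le_sub_of_hasGradientAt (ha.sub (hasGradientAt_half_mul_sq_norm μ v)) u
  simp only [inner_sub_left, inner_sub_right, real_inner_smul_left, real_inner_self_eq_norm_sq]
    at key
  rw [norm_sub_sq_real, inner_sub_right, real_inner_comm v u]
  linarith

end Gradient

section Bregman

variable {n : ℕ} {h : EuclideanSpace ℝ (Fin n) → ℝ}
  {h' : EuclideanSpace ℝ (Fin n) → EuclideanSpace ℝ (Fin n)} {u v : EuclideanSpace ℝ (Fin n)}

@[simp]
theorem bregman_self : bregman h h' v v = 0 := by
  simp [bregman]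

theorem bregman_nonneg (hconv : ConvexOn ℝ univ h) (hv : HasGradientAt h (h' v) v) :
    0 ≤ bregman h h' u v := by
  have := hconv.inner_le_sub_of_hasGradientAt hv u
  rw [bregman]
  linarith

theorem half_mul_sq_le_bregman {μ : ℝ}
    (hconv : ConvexOn ℝ univ (fun z => h z - μ / 2 * ‖z‖ ^ 2)) (hv : HasGradientAt h (h' v) v) :
    μ / 2 * ‖u - v‖ ^ 2 ≤ bregman h h' u v := by
  have := hconv.add_inner_add_sq_le_of_hasGradientAt hv u
  rw [bregman]
  linarith

theorem convexOn_bregman_left (hconv : ConvexOn ℝ univ h) :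
    ConvexOn ℝ univ (fun u => bregman h h' u v) := by
  have := (hconv.sub ((innerₛₗ ℝ (h' v)).concaveOn convex_univ)).add_const
    (⟪h' v, v⟫_ℝ - h v)
  refine this.congr fun u _ => ?_
  simp only [coe_innerₛₗ_apply, Pi.add_apply, Pi.sub_apply, bregman, inner_sub_right]
  ring

theorem hasGradientAt_bregman_left (hu : HasGradientAt h (h' u) u) :
    HasGradientAt (fun z => bregman h h' z v) (h' u - h' v) u := by
  have hlin : HasFDerivAt (fun z => ⟪h' v, z - v⟫_ℝ) (innerSL ℝ (h' v)) u := by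
    simpa [inner_sub_right] using (innerSL ℝ (h' v)).hasFDerivAt.sub_const ⟪h' v, v⟫_ℝ
  exact ((hu.hasFDerivAt.sub_const (h v)).sub hlin).hasGradientAt_of_apply_eq_inner fun w => by
    simp [inner_sub_left]

end Bregman

theorem sq_norm_prod_le {E F : Type*} [SeminormedAddCommGroup E] [SeminormedAddCommGroup F]
    (z : E × F) : ‖z‖ ^ 2 ≤ ‖z.1‖ ^ 2 + ‖z.2‖ ^ 2 := by
  rw [Prod.norm_def]
  rcases le_total ‖z.1‖ ‖z.2‖ with h | h
  · rw [max_eq_right h]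
    linarith [sq_nonneg ‖z.1‖]
  · rw [max_eq_left h]
    linarith [sq_nonneg ‖z.2‖]

theorem summable_of_add_le_of_forall_le {e Φ : ℕ → ℝ} {M : ℝ} (he : ∀ k, 0 ≤ e k)
    (hΦ : ∀ k, Φ (k + 1) + e k ≤ Φ k) (hM : ∀ k, M ≤ Φ k) : Summable e :=
  summable_of_sum_range_le (c := Φ 0 - M) he fun n => by
    have htel := Finset.sum_range_sub' Φ n
    have hle := Finset.sum_le_sum fun k (_ : k ∈ Finset.range n) => le_sub_iff_add_le'.2 (hΦ k)
    linarith [hM n]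

theorem summable_of_lyapunov_descent {L u v w : ℕ → ℝ} {M α μ₀ μ₁ μ₂ a b : ℝ}
    (hu : ∀ k, 0 ≤ u k) (hv : ∀ k, 0 ≤ v k) (hw : ∀ k, 0 ≤ w k)
    (hα : 0 < α) (hμ₀ : 0 < μ₀) (hμ₁ : 0 < μ₁) (hμ₂ : 0 < μ₂) (hb : 0 ≤ b)
    (hαbig : 4 * (a + b) / (μ₁ * μ₀) < α)
    (hdesc : ∀ k, L (k + 1) + μ₁ / 2 * u k + μ₂ / 2 * v k ≤ L k + w k / α)
    (hdual : ∀ k, μ₀ * w (k + 1) ≤ 2 * a * u (k + 1) + 2 * b * u k)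
    (hM : ∀ k, M ≤ L k) :
    Summable u ∧ Summable v ∧ Summable w := by
  set c := 2 / (α * μ₀) with hc_def
  set κ := μ₁ / 2 - c * (a + b) with hκ_def
  have hc : 0 < c := by positivity
  have hκ : 0 < κ := by
    rw [hκ_def, hc_def, sub_pos, div_mul_eq_mul_div, div_lt_iff₀ (by positivity)]
    rw [div_lt_iff₀ (by positivity)] at hαbig
    linarith
  have hwu : ∀ k, w (k + 1) / α ≤ c * a * u (k + 1) + c * b * u k := by
    intro k
    rw [div_le_iff₀ hα, hc_def]
    field_simp
    linarith [hdual k]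
  have hsum : Summable fun k => κ * u (k + 1) + μ₂ / 2 * v (k + 1) := by
    refine summable_of_add_le_of_forall_le (Φ := fun k => L (k + 1) + c * b * u k) (M := M)
      (fun k => add_nonneg (mul_nonneg hκ.le (hu _)) (mul_nonneg (half_pos hμ₂).le (hv _)))
      (fun k => ?_) fun k => ?_
    · rw [hκ_def]
      linarith [hdesc (k + 1), hwu k]
    · linarith [hM (k + 1), mul_nonneg (mul_nonneg hc.le hb) (hu k)]
  have hu_succ : Summable fun k => u (k + 1) :=
    (hsum.mul_left κ⁻¹).of_nonneg_of_le (fun k => hu _) fun k =>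
      (le_inv_mul_iff₀ hκ).2 (by linarith [mul_nonneg (half_pos hμ₂).le (hv (k + 1))])
  have hv_succ : Summable fun k => v (k + 1) :=
    (hsum.mul_left (μ₂ / 2)⁻¹).of_nonneg_of_le (fun k => hv _) fun k =>
      (le_inv_mul_iff₀ (by positivity)).2 (by linarith [mul_nonneg hκ.le (hu (k + 1))])
  have hu' : Summable u := (summable_nat_add_iff 1).1 hu_succ
  have hw_succ : Summable fun k => w (k + 1) :=
    (((hu_succ.mul_left (2 * a)).add (hu'.mul_left (2 * b))).mul_left μ₀⁻¹).of_nonneg_of_le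
      (fun k => hw _) fun k => (le_inv_mul_iff₀ hμ₀).2 (hdual k)
  exact ⟨hu', (summable_nat_add_iff 1).1 hv_succ, (summable_nat_add_iff 1).1 hw_succ⟩

theorem mul_sq_norm_sub_le_of_adjoint_eq {E M : Type*} [NormedAddCommGroup E]
    [InnerProductSpace ℝ E] [CompleteSpace E] [NormedAddCommGroup M] [InnerProductSpace ℝ M]
    [CompleteSpace M] {A : E →L[ℝ] M} {μ₀ ℓf ℓφ : ℝ} {f' φ' : E → E} {x₀ x₁ x₂ : E} {p₁ p₂ : M}
    (hA : ∀ q, μ₀ * ‖q‖ ^ 2 ≤ ‖ContinuousLinearMap.adjoint A q‖ ^ 2)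
    (hf' : ∀ u v, ‖f' u - f' v‖ ≤ ℓf * ‖u - v‖) (hφ' : ∀ u v, ‖φ' u - φ' v‖ ≤ ℓφ * ‖u - v‖)
    (h₁ : ContinuousLinearMap.adjoint A p₁ = -(f' x₁ + (φ' x₁ - φ' x₀)))
    (h₂ : ContinuousLinearMap.adjoint A p₂ = -(f' x₂ + (φ' x₂ - φ' x₁))) :
    μ₀ * ‖p₁ - p₂‖ ^ 2 ≤ 2 * (ℓf + ℓφ) ^ 2 * ‖x₁ - x₂‖ ^ 2 + 2 * ℓφ ^ 2 * ‖x₀ - x₁‖ ^ 2 := by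
  have hdiff : ContinuousLinearMap.adjoint A (p₁ - p₂)
      = (f' x₂ - f' x₁) + (φ' x₂ - φ' x₁) - (φ' x₁ - φ' x₀) := by
    rw [map_sub, h₁, h₂]
    abel
  have hnorm : ‖ContinuousLinearMap.adjoint A (p₁ - p₂)‖
      ≤ (ℓf + ℓφ) * ‖x₁ - x₂‖ + ℓφ * ‖x₀ - x₁‖ := by
    rw [hdiff]
    calc _ ≤ ‖f' x₂ - f' x₁‖ + ‖φ' x₂ - φ' x₁‖ + ‖φ' x₁ - φ' x₀‖ :=
          norm_sub_le_of_le (norm_add_le _ _) le_rfl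
      _ ≤ ℓf * ‖x₂ - x₁‖ + ℓφ * ‖x₂ - x₁‖ + ℓφ * ‖x₁ - x₀‖ := by
          gcongr <;> apply_assumption
      _ = (ℓf + ℓφ) * ‖x₁ - x₂‖ + ℓφ * ‖x₀ - x₁‖ := by
          rw [norm_sub_rev x₂ x₁, norm_sub_rev x₁ x₀]
          ring
  calc μ₀ * ‖p₁ - p₂‖ ^ 2 ≤ ‖ContinuousLinearMap.adjoint A (p₁ - p₂)‖ ^ 2 := hA _
    _ ≤ ((ℓf + ℓφ) * ‖x₁ - x₂‖ + ℓφ * ‖x₀ - x₁‖) ^ 2 := by gcongr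
    _ ≤ 2 * (ℓf + ℓφ) ^ 2 * ‖x₁ - x₂‖ ^ 2 + 2 * ℓφ ^ 2 * ‖x₀ - x₁‖ ^ 2 := by
          nlinarith [sq_nonneg ((ℓf + ℓφ) * ‖x₁ - x₂‖ - ℓφ * ‖x₀ - x₁‖)]

section AugmentedLagrangian

variable {n₁ n₂ m : ℕ}
  {A : EuclideanSpace ℝ (Fin n₁) →L[ℝ] EuclideanSpace ℝ (Fin m)}
  {B : EuclideanSpace ℝ (Fin n₂) →L[ℝ] EuclideanSpace ℝ (Fin m)}
  {f φ : EuclideanSpace ℝ (Fin n₁) → ℝ} {g ψ : EuclideanSpace ℝ (Fin n₂) → ℝ}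
  {φ' : EuclideanSpace ℝ (Fin n₁) → EuclideanSpace ℝ (Fin n₁)}
  {ψ' : EuclideanSpace ℝ (Fin n₂) → EuclideanSpace ℝ (Fin n₂)} {α μ₁ μ₂ : ℝ}
  {a x₀ x₁ : EuclideanSpace ℝ (Fin n₁)} {y₀ y₁ : EuclideanSpace ℝ (Fin n₂)}
  {p₀ p₁ : EuclideanSpace ℝ (Fin m)}

theorem hasGradientAt_augL_fst {a x : EuclideanSpace ℝ (Fin n₁)} (hf : HasGradientAt f a x)
    (y : EuclideanSpace ℝ (Fin n₂)) (p : EuclideanSpace ℝ (Fin m)) :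
    HasGradientAt (fun z => augL A B f g α z y p)
      (a + ContinuousLinearMap.adjoint A (p + α • (A x - B y))) x := by
  have hres : HasFDerivAt (fun z => A z - B y) A x := A.hasFDerivAt.sub_const _
  have hD := (((hf.hasFDerivAt.add_const (g y)).add ((innerSL ℝ p).hasFDerivAt.comp x hres)).add
    (hres.norm_sq.const_mul (α / 2)))
  refine hD.hasGradientAt_of_apply_eq_inner fun w => ?_
  simp only [map_sub, ContinuousLinearMap.sub_comp, add_apply,
    InnerProductSpace.toDual_apply_apply, ContinuousLinearMap.comp_apply, coe_innerSL_apply,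
    smul_apply, sub_apply, nsmul_eq_mul, Nat.cast_ofNat, smul_eq_mul, map_add, map_smul,
    inner_add_left, ContinuousLinearMap.adjoint_inner_left, real_inner_smul_left, inner_sub_left]
  ring

theorem augL_add_smul_residual (x : EuclideanSpace ℝ (Fin n₁)) (y : EuclideanSpace ℝ (Fin n₂))
    (p : EuclideanSpace ℝ (Fin m)) :
    augL A B f g α x y (p + α • (A x - B y)) = augL A B f g α x y p + α * ‖A x - B y‖ ^ 2 := by
  simp only [augL, inner_add_left, real_inner_smul_left, real_inner_self_eq_norm_sq]
  ring

theorem lowerSemicontinuous_augL (hf : Continuous f) (hg : LowerSemicontinuous g) :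
    LowerSemicontinuous fun z : EuclideanSpace ℝ (Fin n₁) × EuclideanSpace ℝ (Fin n₂) ×
        EuclideanSpace ℝ (Fin m) => augL A B f g α z.1 z.2.1 z.2.2 := by
  have hres : Continuous fun z : EuclideanSpace ℝ (Fin n₁) × EuclideanSpace ℝ (Fin n₂) ×
      EuclideanSpace ℝ (Fin m) => A z.1 - B z.2.1 := by fun_prop
  refine (((hf.comp continuous_fst).lowerSemicontinuous.add
    (hg.comp continuous_snd.fst)).add ?_).add ?_
  · exact (continuous_snd.snd.inner hres).lowerSemicontinuous
  · exact (continuous_const.mul (hres.norm.pow 2)).lowerSemicontinuous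

theorem bddBelow_augL_image_of_isBounded (hf : Continuous f) (hg : LowerSemicontinuous g)
    {S : Set (EuclideanSpace ℝ (Fin n₁) × EuclideanSpace ℝ (Fin n₂) × EuclideanSpace ℝ (Fin m))}
    (hS : Bornology.IsBounded S) :
    BddBelow ((fun z => augL A B f g α z.1 z.2.1 z.2.2) '' S) :=
  (((lowerSemicontinuous_augL hf hg).lowerSemicontinuousOn _).bddBelow_of_isCompact
    hS.isCompact_closure).mono (image_mono subset_closure)

theorem adjoint_eq_of_x_update (hf : HasGradientAt f a x₁) (hφ : HasGradientAt φ (φ' x₁) x₁)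
    (hx : ∀ x', augL A B f g α x₁ y₁ p₀ + bregman φ φ' x₁ x₀ ≤
      augL A B f g α x' y₁ p₀ + bregman φ φ' x' x₀) :
    ContinuousLinearMap.adjoint A (p₀ + α • (A x₁ - B y₁)) = -(a + (φ' x₁ - φ' x₀)) := by
  have h0 := IsLocalMin.hasGradientAt_eq_zero (Eventually.of_forall hx)
    ((hasGradientAt_augL_fst hf y₁ p₀).add (hasGradientAt_bregman_left (v := x₀) hφ))
  rw [eq_neg_iff_add_eq_zero, ← h0]
  abel

theorem augL_x_update_descent (hf : HasGradientAt f a x₁) (hφconv : ConvexOn ℝ univ φ)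
    (hφdiff : ∀ u, HasGradientAt φ (φ' u) u)
    (hsc : ConvexOn ℝ univ (fun x => augL A B f g α x y₁ p₀ - μ₁ / 2 * ‖x‖ ^ 2) ∨
      ConvexOn ℝ univ (fun x => φ x - μ₁ / 2 * ‖x‖ ^ 2))
    (hx : ∀ x', augL A B f g α x₁ y₁ p₀ + bregman φ φ' x₁ x₀ ≤
      augL A B f g α x' y₁ p₀ + bregman φ φ' x' x₀) :
    augL A B f g α x₁ y₁ p₀ + μ₁ / 2 * ‖x₀ - x₁‖ ^ 2 ≤ augL A B f g α x₀ y₁ p₀ := by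
  have hmin := hx x₀
  rw [bregman_self] at hmin
  rcases hsc with hL | hφ
  · have hG := (hasGradientAt_augL_fst (A := A) (B := B) (g := g) (α := α) hf y₁ p₀).add
      (hasGradientAt_bregman_left (v := x₀) (hφdiff x₁))
    rw [IsLocalMin.hasGradientAt_eq_zero (Eventually.of_forall hx) hG] at hG
    have hF : ConvexOn ℝ univ
        fun z => augL A B f g α z y₁ p₀ + bregman φ φ' z x₀ - μ₁ / 2 * ‖z‖ ^ 2 :=
      (hL.add (convexOn_bregman_left hφconv)).congr fun z _ => by
        simp only [Pi.add_apply]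
        ring
    have := hF.add_inner_add_sq_le_of_hasGradientAt hG x₀
    rw [inner_zero_left, bregman_self] at this
    linarith [bregman_nonneg (u := x₁) hφconv (hφdiff x₀)]
  · have := half_mul_sq_le_bregman (u := x₁) hφ (hφdiff x₀)
    rw [norm_sub_rev] at this
    linarith

theorem augL_y_update_descent (hψsc : ConvexOn ℝ univ (fun z => ψ z - μ₂ / 2 * ‖z‖ ^ 2))
    (hψ : HasGradientAt ψ (ψ' y₀) y₀)
    (hy : ∀ y', augL A B f g α x₀ y₁ p₀ + bregman ψ ψ' y₁ y₀ ≤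
      augL A B f g α x₀ y' p₀ + bregman ψ ψ' y' y₀) :
    augL A B f g α x₀ y₁ p₀ + μ₂ / 2 * ‖y₀ - y₁‖ ^ 2 ≤ augL A B f g α x₀ y₀ p₀ := by
  have hmin := hy y₀
  have hbreg := half_mul_sq_le_bregman (u := y₁) hψsc hψ
  rw [bregman_self] at hmin
  rw [norm_sub_rev] at hbreg
  linarith

theorem augL_badmm_step_le (hα : 0 < α) (hf : HasGradientAt f a x₁)
    (hφconv : ConvexOn ℝ univ φ) (hφdiff : ∀ u, HasGradientAt φ (φ' u) u)
    (hψsc : ConvexOn ℝ univ (fun z => ψ z - μ₂ / 2 * ‖z‖ ^ 2)) (hψ : HasGradientAt ψ (ψ' y₀) y₀)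
    (hsc : ConvexOn ℝ univ (fun x => augL A B f g α x y₁ p₀ - μ₁ / 2 * ‖x‖ ^ 2) ∨
      ConvexOn ℝ univ (fun x => φ x - μ₁ / 2 * ‖x‖ ^ 2))
    (hy : ∀ y', augL A B f g α x₀ y₁ p₀ + bregman ψ ψ' y₁ y₀ ≤
      augL A B f g α x₀ y' p₀ + bregman ψ ψ' y' y₀)
    (hx : ∀ x', augL A B f g α x₁ y₁ p₀ + bregman φ φ' x₁ x₀ ≤
      augL A B f g α x' y₁ p₀ + bregman φ φ' x' x₀)
    (hp : p₁ = p₀ + α • (A x₁ - B y₁)) :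
    augL A B f g α x₁ y₁ p₁ + μ₁ / 2 * ‖x₀ - x₁‖ ^ 2 + μ₂ / 2 * ‖y₀ - y₁‖ ^ 2 ≤
      augL A B f g α x₀ y₀ p₀ + ‖p₀ - p₁‖ ^ 2 / α := by
  have hdual : augL A B f g α x₁ y₁ p₁ = augL A B f g α x₁ y₁ p₀ + ‖p₀ - p₁‖ ^ 2 / α := by
    rw [hp, augL_add_smul_residual, sub_add_cancel_left, norm_neg, norm_smul, mul_pow,
      Real.norm_eq_abs, sq_abs, sq α, mul_assoc, mul_div_cancel_left₀ _ hα.ne']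
  linarith [augL_x_update_descent hf hφconv hφdiff hsc hx, augL_y_update_descent hψsc hψ hy]

end AugmentedLagrangian

theorem badmm_lemma_III_6_summable_general
{n₁ n₂ m : ℕ}
    (A : EuclideanSpace ℝ (Fin n₁) →L[ℝ] EuclideanSpace ℝ (Fin m))
    (B : EuclideanSpace ℝ (Fin n₂) →L[ℝ] EuclideanSpace ℝ (Fin m))
    (f : EuclideanSpace ℝ (Fin n₁) → ℝ) (g : EuclideanSpace ℝ (Fin n₂) → ℝ)
    (f' : EuclideanSpace ℝ (Fin n₁) → EuclideanSpace ℝ (Fin n₁))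
    (hfgrad : ∀ u, HasGradientAt f (f' u) u)
    (ℓf : ℝ) (hf' : ∀ u v, ‖f' u - f' v‖ ≤ ℓf * ‖u - v‖)
    (hg : LowerSemicontinuous g)
    (φ : EuclideanSpace ℝ (Fin n₁) → ℝ)
    (φ' : EuclideanSpace ℝ (Fin n₁) → EuclideanSpace ℝ (Fin n₁))
    (hφconv : ConvexOn ℝ Set.univ φ) (hφdiff : ∀ u, HasGradientAt φ (φ' u) u)
    (ℓφ : ℝ) (hφ' : ∀ u v, ‖φ' u - φ' v‖ ≤ ℓφ * ‖u - v‖)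
    (ψ : EuclideanSpace ℝ (Fin n₂) → ℝ)
    (ψ' : EuclideanSpace ℝ (Fin n₂) → EuclideanSpace ℝ (Fin n₂))
    (hψdiff : ∀ u, HasGradientAt ψ (ψ' u) u)
    (α μ₀ : ℝ) (hα : 0 < α) (hμ₀ : 0 < μ₀)
    (hA : ∀ q : EuclideanSpace ℝ (Fin m),
      μ₀ * ‖q‖ ^ 2 ≤ ‖ContinuousLinearMap.adjoint A q‖ ^ 2)
    (μ₁ : ℝ) (hμ₁ : 0 < μ₁)
    (hsc : (∀ (y : EuclideanSpace ℝ (Fin n₂)) (p : EuclideanSpace ℝ (Fin m)),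
          ConvexOn ℝ Set.univ (fun x => augL A B f g α x y p - μ₁ / 2 * ‖x‖ ^ 2)) ∨
        ConvexOn ℝ Set.univ (fun x => φ x - μ₁ / 2 * ‖x‖ ^ 2))
    (hαbig : α > 4 * ((ℓf + ℓφ) ^ 2 + ℓφ ^ 2) / (μ₁ * μ₀))
    (x : ℕ → EuclideanSpace ℝ (Fin n₁)) (y : ℕ → EuclideanSpace ℝ (Fin n₂))
    (p : ℕ → EuclideanSpace ℝ (Fin m))
    (hy : ∀ k, ∀ y' : EuclideanSpace ℝ (Fin n₂),
      augL A B f g α (x k) (y (k + 1)) (p k) + bregman ψ ψ' (y (k + 1)) (y k) ≤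
        augL A B f g α (x k) y' (p k) + bregman ψ ψ' y' (y k))
    (hx : ∀ k, ∀ x' : EuclideanSpace ℝ (Fin n₁),
      augL A B f g α (x (k + 1)) (y (k + 1)) (p k) + bregman φ φ' (x (k + 1)) (x k) ≤
        augL A B f g α x' (y (k + 1)) (p k) + bregman φ φ' x' (x k))
    (hp : ∀ k, p (k + 1) = p k + α • (A (x (k + 1)) - B (y (k + 1))))
    (μ₂ : ℝ) (hμ₂ : 0 < μ₂)
    (hψsc : ConvexOn ℝ Set.univ (fun z => ψ z - μ₂ / 2 * ‖z‖ ^ 2))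
    (hbdd : Bornology.IsBounded (Set.range fun k => (x k, y k, p k))) :
    Summable (fun k => ‖((x k, y k, p k) : EuclideanSpace ℝ (Fin n₁) ×
        EuclideanSpace ℝ (Fin n₂) × EuclideanSpace ℝ (Fin m))
        - (x (k + 1), y (k + 1), p (k + 1))‖ ^ 2) ∧
      Filter.Tendsto (fun k => ‖((x k, y k, p k) : EuclideanSpace ℝ (Fin n₁) ×
          EuclideanSpace ℝ (Fin n₂) × EuclideanSpace ℝ (Fin m))
          - (x (k + 1), y (k + 1), p (k + 1))‖)
        Filter.atTop (nhds 0) := by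
  have hf : Continuous f := continuous_iff_continuousAt.2 fun u => (hfgrad u).continuousAt
  obtain ⟨M, hM⟩ := bddBelow_augL_image_of_isBounded (A := A) (B := B) (α := α) hf hg hbdd
  have hstat : ∀ k, ContinuousLinearMap.adjoint A (p (k + 1)) =
      -(f' (x (k + 1)) + (φ' (x (k + 1)) - φ' (x k))) := fun k => by
    rw [hp k]
    exact adjoint_eq_of_x_update (hfgrad _) (hφdiff _) (hx k)
  obtain ⟨hu, hv, hw⟩ := summable_of_lyapunov_descent
    (L := fun k => augL A B f g α (x k) (y k) (p k)) (u := fun k => ‖x k - x (k + 1)‖ ^ 2)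
    (v := fun k => ‖y k - y (k + 1)‖ ^ 2) (w := fun k => ‖p k - p (k + 1)‖ ^ 2)
    (fun _ => sq_nonneg _) (fun _ => sq_nonneg _) (fun _ => sq_nonneg _) hα hμ₀ hμ₁ hμ₂
    (sq_nonneg ℓφ) hαbig
    (fun k => augL_badmm_step_le hα (hfgrad _) hφconv hφdiff hψsc (hψdiff _)
      (hsc.imp_left fun h => h _ _) (hy k) (hx k) (hp k))
    (fun k => mul_sq_norm_sub_le_of_adjoint_eq hA hf' hφ' (hstat k) (hstat (k + 1)))
    (fun k => hM (mem_image_of_mem _ (mem_range_self k)))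
  have hsum : Summable fun k => ‖(x k, y k, p k) - (x (k + 1), y (k + 1), p (k + 1))‖ ^ 2 :=
    ((hu.add hv).add hw).of_nonneg_of_le (fun _ => sq_nonneg _) fun k => by
      have hxyp := sq_norm_prod_le ((x k, y k, p k) - (x (k + 1), y (k + 1), p (k + 1)))
      have hyp := sq_norm_prod_le ((y k, p k) - (y (k + 1), p (k + 1)))
      simp only [Prod.fst_sub, Prod.snd_sub] at hxyp hyp
      linarith
  exact ⟨hsum, by simpa using hsum.tendsto_atTop_zero.sqrt⟩

theorem badmm_lemma_III_6_summable
{n₁ n₂ m : ℕ} (hn₁ : 0 < n₁) (hn₂ : 0 < n₂) (hm : 0 < m)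
    (A : EuclideanSpace ℝ (Fin n₁) →L[ℝ] EuclideanSpace ℝ (Fin m))
    (B : EuclideanSpace ℝ (Fin n₂) →L[ℝ] EuclideanSpace ℝ (Fin m))
    (f : EuclideanSpace ℝ (Fin n₁) → ℝ) (g : EuclideanSpace ℝ (Fin n₂) → ℝ)
    (f' : EuclideanSpace ℝ (Fin n₁) → EuclideanSpace ℝ (Fin n₁))
    (hfC1 : ContDiff ℝ 1 f) (hfgrad : ∀ u, HasGradientAt f (f' u) u)
    (ℓf : ℝ) (hℓf : 0 ≤ ℓf) (hf' : ∀ u v, ‖f' u - f' v‖ ≤ ℓf * ‖u - v‖)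
    (hg : LowerSemicontinuous g)
    (φ : EuclideanSpace ℝ (Fin n₁) → ℝ)
    (φ' : EuclideanSpace ℝ (Fin n₁) → EuclideanSpace ℝ (Fin n₁))
    (hφconv : ConvexOn ℝ Set.univ φ) (hφdiff : ∀ u, HasGradientAt φ (φ' u) u)
    (ℓφ : ℝ) (hℓφ : 0 ≤ ℓφ) (hφ' : ∀ u v, ‖φ' u - φ' v‖ ≤ ℓφ * ‖u - v‖)
    (ψ : EuclideanSpace ℝ (Fin n₂) → ℝ)
    (ψ' : EuclideanSpace ℝ (Fin n₂) → EuclideanSpace ℝ (Fin n₂))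
    (hψconv : ConvexOn ℝ Set.univ ψ) (hψdiff : ∀ u, HasGradientAt ψ (ψ' u) u)
    (ℓψ : ℝ) (hℓψ : 0 ≤ ℓψ) (hψ' : ∀ u v, ‖ψ' u - ψ' v‖ ≤ ℓψ * ‖u - v‖)
    (α μ₀ : ℝ) (hα : 0 < α) (hμ₀ : 0 < μ₀)
    (hA : ∀ q : EuclideanSpace ℝ (Fin m),
      μ₀ * ‖q‖ ^ 2 ≤ ‖ContinuousLinearMap.adjoint A q‖ ^ 2)
    (μ₁ : ℝ) (hμ₁ : 0 < μ₁)
    (hsc : (∀ (y : EuclideanSpace ℝ (Fin n₂)) (p : EuclideanSpace ℝ (Fin m)),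
          ConvexOn ℝ Set.univ (fun x => augL A B f g α x y p - μ₁ / 2 * ‖x‖ ^ 2)) ∨
        ConvexOn ℝ Set.univ (fun x => φ x - μ₁ / 2 * ‖x‖ ^ 2))
    (hαbig : α > 4 * ((ℓf + ℓφ) ^ 2 + ℓφ ^ 2) / (μ₁ * μ₀))
    (x : ℕ → EuclideanSpace ℝ (Fin n₁)) (y : ℕ → EuclideanSpace ℝ (Fin n₂))
    (p : ℕ → EuclideanSpace ℝ (Fin m))
    (hy : ∀ k, ∀ y' : EuclideanSpace ℝ (Fin n₂),
      augL A B f g α (x k) (y (k + 1)) (p k) + bregman ψ ψ' (y (k + 1)) (y k) ≤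
        augL A B f g α (x k) y' (p k) + bregman ψ ψ' y' (y k))
    (hx : ∀ k, ∀ x' : EuclideanSpace ℝ (Fin n₁),
      augL A B f g α (x (k + 1)) (y (k + 1)) (p k) + bregman φ φ' (x (k + 1)) (x k) ≤
        augL A B f g α x' (y (k + 1)) (p k) + bregman φ φ' x' (x k))
    (hp : ∀ k, p (k + 1) = p k + α • (A (x (k + 1)) - B (y (k + 1))))
    (μ₂ : ℝ) (hμ₂ : 0 < μ₂)
    (hψsc : ConvexOn ℝ Set.univ (fun z => ψ z - μ₂ / 2 * ‖z‖ ^ 2))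
    (hbdd : Bornology.IsBounded (Set.range fun k => (x k, y k, p k))) :
    Summable (fun k => ‖((x k, y k, p k) : EuclideanSpace ℝ (Fin n₁) ×
        EuclideanSpace ℝ (Fin n₂) × EuclideanSpace ℝ (Fin m))
        - (x (k + 1), y (k + 1), p (k + 1))‖ ^ 2) ∧
      Filter.Tendsto (fun k => ‖((x k, y k, p k) : EuclideanSpace ℝ (Fin n₁) ×
          EuclideanSpace ℝ (Fin n₂) × EuclideanSpace ℝ (Fin m))
          - (x (k + 1), y (k + 1), p (k + 1))‖)
        Filter.atTop (nhds 0) :=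
  badmm_lemma_III_6_summable_general A B f g f' hfgrad ℓf hf' hg φ φ' hφconv hφdiff ℓφ hφ' ψ ψ'
    hψdiff α μ₀ hα hμ₀ hA μ₁ hμ₁ hsc hαbig x y p hy hx hp μ₂ hμ₂ hψsc hbdd
end

section
/- Suppose ψ : ℝ^{n₂} → ℝ is differentiable and μ₂-strongly convex (μ₂ > 0), and y^{k+1} is a global minimizer of y ↦ L_α(x^k, y, p^k) + Δ_ψ(y, y^k) over ℝ^{n₂}. Then L_α(x^k, y^{k+1}, p^k) ≤ L_α(x^k, y^k, p^k) − (μ₂/2)‖y^{k+1} − y^k‖². -/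
/-!
The Bregman distance of a `μ₂`-strongly convex `ψ` dominates `(μ₂/2)‖y - y'‖²`, by the first-order
characterisation of convexity applied to `ψ - (μ₂/2)‖·‖²`. Comparing the minimiser `y^{k+1}` with the
competitor `y^k`, whose Bregman term vanishes, gives the descent.
-/

open scoped InnerProductSpace

theorem ConvexOn.add_fderiv_sub_le {E : Type*} [NormedAddCommGroup E] [NormedSpace ℝ E]
    {s : Set E} {φ : E → ℝ} {φ' : E →L[ℝ] ℝ} {u v : E} (hφ : ConvexOn ℝ s φ)
    (hv : v ∈ s) (hu : u ∈ s) (hd : HasFDerivAt φ φ' v) :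
    φ v + φ' (u - v) ≤ φ u := by
  have hline : ConvexOn ℝ (Set.Icc (0 : ℝ) 1) (φ ∘ AffineMap.lineMap (k := ℝ) v u) :=
    (hφ.comp_affineMap _).subset
      (fun t ht => hφ.1.lineMap_mem hv hu ht) (convex_Icc 0 1)
  have hderiv : HasDerivAt (φ ∘ AffineMap.lineMap (k := ℝ) v u) (φ' (u - v)) 0 := by
    refine HasFDerivAt.comp_hasDerivAt _ ?_ AffineMap.hasDerivAt_lineMap
    simpa using hd
  have hslope := hline.le_slope_of_hasDerivAt (by simp) (by simp) zero_lt_one hderiv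
  simpa [slope_def_field, le_sub_iff_add_le'] using hslope

theorem StrongConvexOn.add_inner_add_sq_le {E : Type*} [NormedAddCommGroup E]
    [InnerProductSpace ℝ E] [CompleteSpace E] {s : Set E} {μ : ℝ} {ψ : E → ℝ} {g u v : E}
    (hψ : StrongConvexOn s μ ψ) (hv : v ∈ s) (hu : u ∈ s) (hg : HasGradientAt ψ g v) :
    ψ v + ⟪g, u - v⟫_ℝ + μ / 2 * ‖u - v‖ ^ 2 ≤ ψ u := by
  have hconv := (strongConvexOn_iff_convex.mp hψ).add_fderiv_sub_le hv hu
    ((hasGradientAt_iff_hasFDerivAt.mp hg).sub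
      ((hasStrictFDerivAt_norm_sq v).hasFDerivAt.const_mul (μ / 2)))
  simp only [sub_apply, smul_apply, InnerProductSpace.toDual_apply_apply, innerSL_apply_apply,
    smul_eq_mul, nsmul_eq_mul, Nat.cast_ofNat, inner_sub_right, real_inner_self_eq_norm_sq] at hconv
  rw [norm_sub_sq_real, inner_sub_right, real_inner_comm v u]
  linear_combination hconv

theorem bregman_self_s13 {n : ℕ} (h : EuclideanSpace ℝ (Fin n) → ℝ)
    (h' : EuclideanSpace ℝ (Fin n) → EuclideanSpace ℝ (Fin n)) (u : EuclideanSpace ℝ (Fin n)) :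
    bregman h h' u u = 0 := by
  simp [bregman]

theorem StrongConvexOn.mul_sq_norm_sub_le_bregman {n : ℕ} {μ : ℝ}
    {ψ : EuclideanSpace ℝ (Fin n) → ℝ} {ψ' : EuclideanSpace ℝ (Fin n) → EuclideanSpace ℝ (Fin n)}
    (hψ : StrongConvexOn Set.univ μ ψ) {u v : EuclideanSpace ℝ (Fin n)}
    (hv : HasGradientAt ψ (ψ' v) v) :
    μ / 2 * ‖u - v‖ ^ 2 ≤ bregman ψ ψ' u v := by
  have := hψ.add_inner_add_sq_le (Set.mem_univ v) (Set.mem_univ u) hv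
  unfold bregman
  linarith

theorem badmm_y_descent_general {n₁ n₂ m : ℕ}
    (A : EuclideanSpace ℝ (Fin n₁) →L[ℝ] EuclideanSpace ℝ (Fin m))
    (B : EuclideanSpace ℝ (Fin n₂) →L[ℝ] EuclideanSpace ℝ (Fin m))
    (f : EuclideanSpace ℝ (Fin n₁) → ℝ) (g : EuclideanSpace ℝ (Fin n₂) → ℝ)
    (α : ℝ)
    (ψ : EuclideanSpace ℝ (Fin n₂) → ℝ)
    (ψ' : EuclideanSpace ℝ (Fin n₂) → EuclideanSpace ℝ (Fin n₂))
    (hψdiff : ∀ u, HasGradientAt ψ (ψ' u) u)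
    (μ₂ : ℝ)
    (hψsc : ConvexOn ℝ Set.univ (fun z => ψ z - μ₂ / 2 * ‖z‖ ^ 2))
    (xk : EuclideanSpace ℝ (Fin n₁)) (yk y1 : EuclideanSpace ℝ (Fin n₂))
    (pk : EuclideanSpace ℝ (Fin m))
    (hmin : ∀ y : EuclideanSpace ℝ (Fin n₂),
      augL A B f g α xk y1 pk + bregman ψ ψ' y1 yk ≤
        augL A B f g α xk y pk + bregman ψ ψ' y yk) :
    augL A B f g α xk y1 pk ≤
      augL A B f g α xk yk pk - μ₂ / 2 * ‖y1 - yk‖ ^ 2 := by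
  have hcompare := hmin yk
  rw [bregman_self_s13, add_zero] at hcompare
  have hbregman : μ₂ / 2 * ‖y1 - yk‖ ^ 2 ≤ bregman ψ ψ' y1 yk :=
    (strongConvexOn_iff_convex.mpr hψsc).mul_sq_norm_sub_le_bregman (hψdiff yk)
  linarith

theorem badmm_y_descent {n₁ n₂ m : ℕ} (hn₁ : 0 < n₁) (hn₂ : 0 < n₂) (hm : 0 < m)
    (A : EuclideanSpace ℝ (Fin n₁) →L[ℝ] EuclideanSpace ℝ (Fin m))
    (B : EuclideanSpace ℝ (Fin n₂) →L[ℝ] EuclideanSpace ℝ (Fin m))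
    (f : EuclideanSpace ℝ (Fin n₁) → ℝ) (g : EuclideanSpace ℝ (Fin n₂) → ℝ)
    (α : ℝ) (hα : 0 < α)
    (ψ : EuclideanSpace ℝ (Fin n₂) → ℝ)
    (ψ' : EuclideanSpace ℝ (Fin n₂) → EuclideanSpace ℝ (Fin n₂))
    (hψdiff : ∀ u, HasGradientAt ψ (ψ' u) u)
    (μ₂ : ℝ) (hμ₂ : 0 < μ₂)
    (hψsc : ConvexOn ℝ Set.univ (fun z => ψ z - μ₂ / 2 * ‖z‖ ^ 2))
    (xk : EuclideanSpace ℝ (Fin n₁)) (yk y1 : EuclideanSpace ℝ (Fin n₂))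
    (pk : EuclideanSpace ℝ (Fin m))
    (hmin : ∀ y : EuclideanSpace ℝ (Fin n₂),
      augL A B f g α xk y1 pk + bregman ψ ψ' y1 yk ≤
        augL A B f g α xk y pk + bregman ψ ψ' y yk) :
    augL A B f g α xk y1 pk ≤
      augL A B f g α xk yk pk - μ₂ / 2 * ‖y1 - yk‖ ^ 2 :=
  badmm_y_descent_general A B f g α ψ ψ' hψdiff μ₂ hψsc xk yk y1 pk hmin
end

section
/- (Telescoping lemma in the proof of Theorem III.4) Let (a_k)_{k≥0} be a sequence of nonnegative reals, let (d_k)_{k≥0} be a nonincreasing sequence of nonnegative reals, and let k₁ ≥ 3 be such that 4a_k ≤ a_{k−1} + a_{k−2} + a_{k−3} + (d_k − d_{k+1}) for all k ≥ k₁. Then ∑_{k=0}^∞ a_k < ∞. -/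
/-!
The weighted sum `Φ k = 3 a_{k-1} + 2 a_{k-2} + a_{k-3} + d_k` is a nonnegative Lyapunov
function: the recursion says exactly that `a_k + Φ (k + 1) ≤ Φ k` for `k ≥ k₁`. Summing this
telescopes, so the partial sums of `a` are bounded by `Φ k₁` plus finitely many terms.
-/

open Finset

theorem summable_of_add_potential_succ_le {a Φ : ℕ → ℝ} (ha : ∀ k, 0 ≤ a k)
    (hΦ : ∀ k, 0 ≤ Φ k) (hstep : ∀ k, a k + Φ (k + 1) ≤ Φ k) : Summable a :=
  summable_of_sum_range_le ha fun n =>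
    calc ∑ k ∈ range n, a k ≤ ∑ k ∈ range n, (Φ k - Φ (k + 1)) :=
          sum_le_sum fun k _ => by linarith [hstep k]
      _ = Φ 0 - Φ n := sum_range_sub' Φ n
      _ ≤ Φ 0 := by linarith [hΦ n]

theorem summable_of_add_potential_succ_le_of_le {a Φ : ℕ → ℝ} (N : ℕ) (ha : ∀ k, 0 ≤ a k)
    (hΦ : ∀ k, 0 ≤ Φ k) (hstep : ∀ k, N ≤ k → a k + Φ (k + 1) ≤ Φ k) : Summable a :=
  (summable_nat_add_iff N).1 <|
    summable_of_add_potential_succ_le (fun k => ha (k + N)) (fun k => hΦ (k + N)) fun k => by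
      simpa only [add_right_comm k 1 N] using hstep (k + N) (Nat.le_add_left N k)

theorem telescoping_lemma_III_4_general
    (a d : ℕ → ℝ) (ha : ∀ k, 0 ≤ a k) (hd : ∀ k, 0 ≤ d k)
    (k₁ : ℕ)
    (hrec : ∀ k, k₁ ≤ k →
      4 * a k ≤ a (k - 1) + a (k - 2) + a (k - 3) + (d k - d (k + 1))) :
    Summable a := by
  set Φ : ℕ → ℝ := fun k => 3 * a (k - 1) + 2 * a (k - 2) + a (k - 3) + d k
  have hΦ : ∀ k, 0 ≤ Φ k := fun k => by
    have := ha (k - 1); have := ha (k - 2); have := ha (k - 3); have := hd k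
    simp only [Φ]; linarith
  refine summable_of_add_potential_succ_le_of_le k₁ ha hΦ fun k hk => ?_
  have h1 : k + 1 - 1 = k := rfl
  have h2 : k + 1 - 2 = k - 1 := by omega
  have h3 : k + 1 - 3 = k - 2 := by omega
  simp only [Φ, h1, h2, h3]
  linarith [hrec k hk]

theorem telescoping_lemma_III_4
    (a d : ℕ → ℝ) (ha : ∀ k, 0 ≤ a k) (hd : ∀ k, 0 ≤ d k)
    (hdmono : ∀ k, d (k + 1) ≤ d k)
    (k₁ : ℕ) (hk₁ : 3 ≤ k₁)
    (hrec : ∀ k, k₁ ≤ k →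
      4 * a k ≤ a (k - 1) + a (k - 2) + a (k - 3) + (d k - d (k + 1))) :
    Summable a :=
  telescoping_lemma_III_4_general a d ha hd k₁ hrec
end

section
/- (Telescoping lemma in the proof of Theorem III.8) Let (a_k)_{k≥0} and (b_k)_{k≥0} be sequences of nonnegative reals, let (d_k)_{k≥0} be a nonincreasing sequence of nonnegative reals, and let k₁ ≥ 2 be such that 3(a_k + b_k) ≤ a_{k−1} + b_{k−1} + a_{k−2} + (d_k − d_{k+1}) for all k ≥ k₁. Then ∑_{k=0}^∞ (a_k + b_k) < ∞. -/
/-! The sequence `c k = a k + b k` satisfies `3 c (k+2) ≤ c (k+1) + c k + (d (k+2) - d (k+3))` from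
`k₁` on. Summing, the quantity `∑_{i<n} c (i+2) + 2 c (n+1) + c n + d n` is nonincreasing in `n`,
so the partial sums of `c` stay bounded by `2 c 1 + c 0 + d 0` (after a shift by `k₁`). -/

open Finset

theorem sum_range_add_le_of_three_mul_le {c d : ℕ → ℝ}
    (h : ∀ k, 3 * c (k + 2) ≤ c (k + 1) + c k + (d k - d (k + 1))) (n : ℕ) :
    ∑ i ∈ range n, c (i + 2) + 2 * c (n + 1) + c n ≤ 2 * c 1 + c 0 + (d 0 - d n) := by
  induction n with
  | zero => simp
  | succ n ih =>
    rw [sum_range_succ]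
    linarith [h n]

theorem summable_of_three_mul_le {c d : ℕ → ℝ} (hc : ∀ k, 0 ≤ c k) (hd : ∀ k, 0 ≤ d k)
    (h : ∀ k, 3 * c (k + 2) ≤ c (k + 1) + c k + (d k - d (k + 1))) : Summable c := by
  refine (summable_nat_add_iff 2).1 <|
    summable_of_sum_range_le (c := 2 * c 1 + c 0 + d 0) (fun k => hc _) fun n => ?_
  linarith [sum_range_add_le_of_three_mul_le h n, hc n, hc (n + 1), hd n]

theorem telescoping_lemma_III_8_general
    (a b d : ℕ → ℝ) (ha : ∀ k, 0 ≤ a k) (hb : ∀ k, 0 ≤ b k) (hd : ∀ k, 0 ≤ d k)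
    (k₁ : ℕ)
    (hrec : ∀ k, k₁ ≤ k →
      3 * (a k + b k) ≤ a (k - 1) + b (k - 1) + a (k - 2) + (d k - d (k + 1))) :
    Summable (fun k => a k + b k) := by
  refine (summable_nat_add_iff k₁).1 <|
    summable_of_three_mul_le (d := fun k => d (k + k₁ + 2)) (fun k => add_nonneg (ha _) (hb _))
      (fun k => hd _) fun k => ?_
  have hk := hrec (k + 2 + k₁) (by omega)
  rw [show k + 2 + k₁ - 1 = k + 1 + k₁ by omega, show k + 2 + k₁ - 2 = k + k₁ by omega] at hk
  simp only [show k + 1 + k₁ + 2 = k + 2 + k₁ + 1 by omega, show k + k₁ + 2 = k + 2 + k₁ by omega]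
  linarith [hb (k + k₁)]

theorem telescoping_lemma_III_8
    (a b d : ℕ → ℝ) (ha : ∀ k, 0 ≤ a k) (hb : ∀ k, 0 ≤ b k) (hd : ∀ k, 0 ≤ d k)
    (hdmono : ∀ k, d (k + 1) ≤ d k)
    (k₁ : ℕ) (hk₁ : 2 ≤ k₁)
    (hrec : ∀ k, k₁ ≤ k →
      3 * (a k + b k) ≤ a (k - 1) + b (k - 1) + a (k - 2) + (d k - d (k + 1))) :
    Summable (fun k => a k + b k) :=
  telescoping_lemma_III_8_general a b d ha hb hd k₁ hrec
end
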